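/- Let θ : D* → D*⊗D* be the k-linear map determined by θ(1) = 1⊗1, θ(Y_s) = Y_s⊗Y_s and θ(ω_s) = ω_s⊗Y_s + Y_s⊗ω_s for all s ∈ ℤ. Then θ is a morphism of differential graded k-algebras — i.e. θ(ab) = θ(a)θ(b) for all a, b ∈ D*, θ(1) is the unit, and θ∘d = d∘θ — and moreover (ε₋⊗id)∘θ = id and (id⊗ε₋)∘θ = id. -/

import Mathlib

/-- Basis labels for the differential graded algebra `D*` over `k`:
`one` is the constant function `1` (degree 0), `Y s` is the Heaviside function
with singular support `{s}` (degree 0), and `om s` is the Dirac function with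
singular support `{s}` (degree 1). -/
inductive DB : Type
  | one : DB
  | Y : ℤ → DB
  | om : ℤ → DB
  deriving DecidableEq

/-- cohomological degree of a basis element -/
def DB.deg : DB → ℕ
  | .one => 0
  | .Y _ => 0
  | .om _ => 1

/-- singular support of a basis element -/
def DB.supp : DB → Finset ℤ
  | .one => ∅
  | .Y s => {s}
  | .om s => {s}

variable (k : Type) [CommRing k]

/-- The `n`-fold tensor power `D*^{⊗n}` of the complex `D*` over `k`, modelled as the
free `k`-module on the basis of decomposable tensors `f₁ ⊗ ⋯ ⊗ f_n` of basis elements. -/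
abbrev Tot (n : ℕ) : Type := (Fin n → DB) →₀ k

/-- total (cohomological) degree of a basis tensor -/
def degT {n : ℕ} (g : Fin n → DB) : ℕ := ∑ i, (g i).deg

/-- the homogeneous degree-`i` component of `D*^{⊗n}` -/
def homog (n i : ℕ) : Submodule k (Tot k n) where
  carrier := {x | ∀ g, x g ≠ 0 → degT g = i}
  add_mem' := by
    intro x y hx hy g hg
    by_cases h : x g = 0
    · refine hy g ?_
      intro h'; apply hg; simp [Finsupp.add_apply, h, h']
    · exact hx g h
  zero_mem' := by intro g hg; simp at hg
  smul_mem' := by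
    intro c x hx g hg
    refine hx g fun h => hg ?_
    simp [Finsupp.smul_apply, h]

lemma mem_homog {n i : ℕ} {x : Tot k n} :
    x ∈ homog k n i ↔ ∀ g, x g ≠ 0 → degT g = i := Iff.rfl

/-- `I` : the span of the basis tensors `f₀ ⊗ ⋯ ⊗ f_r` in which every factor is a
Heaviside or a Dirac function (no factor equals `1`). -/
def noOne (n : ℕ) : Submodule k (Tot k n) where
  carrier := {x | ∀ g, x g ≠ 0 → ∀ i, g i ≠ DB.one}
  add_mem' := by
    intro x y hx hy g hg
    by_cases h : x g = 0
    · refine hy g ?_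
      intro h'; apply hg; simp [Finsupp.add_apply, h, h']
    · exact hx g h
  zero_mem' := by intro g hg; simp at hg
  smul_mem' := by
    intro c x hx g hg
    refine hx g fun h => hg ?_
    simp [Finsupp.smul_apply, h]

lemma mem_noOne {n : ℕ} {x : Tot k n} :
    x ∈ noOne k n ↔ ∀ g, x g ≠ 0 → ∀ i, g i ≠ DB.one := Iff.rfl

/-- The Koszul-sign differential on a basis tensor:
`d(f₁ ⊗ ⋯ ⊗ f_n) = Σ_i (-1)^{deg f₁ + ⋯ + deg f_{i-1}} f₁ ⊗ ⋯ ⊗ d f_i ⊗ ⋯ ⊗ f_n`,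
where `d(Y s) = - ω_s`, `d 1 = 0`, `d (ω s) = 0`. -/
noncomputable def dB {n : ℕ} (g : Fin n → DB) : Tot k n :=
  ∑ i : Fin n,
    match g i with
    | DB.Y s =>
        Finsupp.single (Function.update g i (DB.om s))
          (-(-1 : k) ^ (∑ j ∈ Finset.univ.filter (fun j : Fin n => j < i), (g j).deg))
    | _ => (0 : Tot k n)

/-- the total differential of the complex `D*^{⊗n}` (it raises degree by one) -/
noncomputable def dT (n : ℕ) : Tot k n →ₗ[k] Tot k n :=
  Finsupp.linearCombination k (dB k (n := n))


/-- multiplication of `D*` on basis elements -/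
noncomputable def mulB : DB → DB → Tot k 1
  | DB.one, b => Finsupp.single (fun _ => b) 1
  | a, DB.one => Finsupp.single (fun _ => a) 1
  | DB.Y s, DB.Y t => Finsupp.single (fun _ => DB.Y (min s t)) 1
  | DB.Y s, DB.om t => if t ≤ s then Finsupp.single (fun _ => DB.om t) 1 else 0
  | DB.om t, DB.Y s => if t + 1 ≤ s then Finsupp.single (fun _ => DB.om t) 1 else 0
  | DB.om _, DB.om _ => 0

/-- the (bilinear) multiplication of `D*` -/
noncomputable def mul1 : Tot k 1 →ₗ[k] Tot k 1 →ₗ[k] Tot k 1 :=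
  Finsupp.linearCombination k fun a =>
    Finsupp.linearCombination k fun b => mulB k (a 0) (b 0)

/-- the bilinear gluing map `D* × D* → D* ⊗ D*` -/
noncomputable def combine : Tot k 1 →ₗ[k] Tot k 1 →ₗ[k] Tot k 2 :=
  Finsupp.linearCombination k fun a =>
    Finsupp.linearCombination k fun b => Finsupp.single ![a 0, b 0] (1 : k)

/-- the multiplication of the graded tensor-product algebra `D* ⊗ D*`:
`(a ⊗ b)(c ⊗ d) = (-1)^{(deg b)(deg c)} (ac) ⊗ (bd)` -/
noncomputable def mul2 : Tot k 2 →ₗ[k] Tot k 2 →ₗ[k] Tot k 2 :=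
  Finsupp.linearCombination k fun g =>
    Finsupp.linearCombination k fun h =>
      ((-1 : k) ^ ((g 1).deg * (h 0).deg)) •
        combine k (mulB k (g 0) (h 0)) (mulB k (g 1) (h 1))

/-- the map `θ : D* → D* ⊗ D*` determined by `θ(1) = 1⊗1`, `θ(Y_s) = Y_s ⊗ Y_s`,
`θ(ω_s) = ω_s ⊗ Y_s + Y_s ⊗ ω_s`. -/
noncomputable def theta : Tot k 1 →ₗ[k] Tot k 2 :=
  Finsupp.linearCombination k fun g =>
    match g 0 with
    | DB.one => Finsupp.single ![DB.one, DB.one] 1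
    | DB.Y s => Finsupp.single ![DB.Y s, DB.Y s] 1
    | DB.om s => Finsupp.single ![DB.om s, DB.Y s] 1 + Finsupp.single ![DB.Y s, DB.om s] 1

/-- the augmentation `ε₋` on basis elements: `ε₋ 1 = 1`, `ε₋ Y_s = 1`, `ε₋ ω_s = 0` -/
def epsB : DB → k
  | DB.one => 1
  | DB.Y _ => 1
  | DB.om _ => 0

/-- `ε₋ ⊗ id : D* ⊗ D* → D*` -/
noncomputable def epsL : Tot k 2 →ₗ[k] Tot k 1 :=
  Finsupp.linearCombination k fun g =>
    epsB k (g 0) • Finsupp.single (fun _ : Fin 1 => g 1) (1 : k)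

/-- `id ⊗ ε₋ : D* ⊗ D* → D*` -/
noncomputable def epsR : Tot k 2 →ₗ[k] Tot k 1 :=
  Finsupp.linearCombination k fun g =>
    epsB k (g 1) • Finsupp.single (fun _ : Fin 1 => g 0) (1 : k)

/-!
Every map involved is `k`-linear (the products bilinear), so each identity only has to be
checked on the basis `1, Y_s, ω_s` of `D*`. There it is a finite computation, driven by
`Y_s Y_t = Y_{min s t}`, `Y_s ω_t = [t ≤ s] ω_t`, `ω_t Y_s = [t < s] ω_t` and `d Y_s = -ω_s`.
-/

lemma fun_fin_one_eq_const {α : Type*} (a : Fin 1 → α) : (fun _ => a 0) = a :=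
  funext fun i => by rw [Subsingleton.elim i 0]

lemma Tot.hom_ext_one {M : Type*} [AddCommMonoid M] [Module k M] {f g : Tot k 1 →ₗ[k] M}
    (h : ∀ x : DB, f (Finsupp.single (fun _ => x) 1) = g (Finsupp.single (fun _ => x) 1)) :
    f = g :=
  Finsupp.lhom_ext' fun a => LinearMap.ext_ring <| fun_fin_one_eq_const a ▸ h (a 0)

@[simp]
lemma theta_one :
    theta k (Finsupp.single (fun _ => DB.one) 1) = Finsupp.single ![.one, .one] 1 := by
  simp [theta]

@[simp]
lemma theta_Y (s : ℤ) :
    theta k (Finsupp.single (fun _ => DB.Y s) 1) = Finsupp.single ![.Y s, .Y s] 1 := by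
  simp [theta]

@[simp]
lemma theta_om (s : ℤ) : theta k (Finsupp.single (fun _ => DB.om s) 1) =
    Finsupp.single ![.om s, .Y s] 1 + Finsupp.single ![.Y s, .om s] 1 := by
  simp [theta]

@[simp]
lemma mul1_single_single (x y : DB) :
    mul1 k (Finsupp.single (fun _ => x) 1) (Finsupp.single (fun _ => y) 1) = mulB k x y := by
  simp [mul1]

@[simp]
lemma combine_single_single (x y : DB) :
    combine k (Finsupp.single (fun _ => x) 1) (Finsupp.single (fun _ => y) 1) =
      Finsupp.single ![x, y] 1 := by
  simp [combine]

@[simp]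
lemma mul2_single_single (g h : Fin 2 → DB) :
    mul2 k (Finsupp.single g 1) (Finsupp.single h 1) =
      (-1 : k) ^ ((g 1).deg * (h 0).deg) •
        combine k (mulB k (g 0) (h 0)) (mulB k (g 1) (h 1)) := by
  simp [mul2]

lemma theta_mulB (x y : DB) :
    theta k (mulB k x y) = mul2 k (theta k (Finsupp.single (fun _ => x) 1))
      (theta k (Finsupp.single (fun _ => y) 1)) := by
  cases x <;> cases y <;> simp [mulB, DB.deg]
  case Y.om s t =>
    by_cases h : t ≤ s <;> simp [h]
  case om.Y s t =>
    rcases lt_or_ge s t with h | h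
    · simp [h, h.le]
    · simp [not_lt.mpr h]
  -- `ω_s Y_t ≠ 0` needs `s < t` and `Y_s ω_t ≠ 0` needs `t ≤ s`: every cross term vanishes.
  case om.om s t =>
    rcases lt_or_ge s t with h | h
    · simp [h, not_le.mpr h]
    · simp [h, not_lt.mpr h]

theorem theta_mul1 (x y : Tot k 1) : theta k (mul1 k x y) = mul2 k (theta k x) (theta k y) := by
  suffices (mul1 k).compr₂ (theta k) = (mul2 k).compl₁₂ (theta k) (theta k) from
    LinearMap.congr_fun₂ this x y
  refine Tot.hom_ext_one k fun x => Tot.hom_ext_one k fun y => ?_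
  simpa using theta_mulB k x y

@[simp]
lemma dT_single (n : ℕ) (g : Fin n → DB) : dT k n (Finsupp.single g 1) = dB k g := by
  simp [dT]

lemma update_vec_two_zero {α : Type*} (a b x : α) : Function.update ![a, b] 0 x = ![x, b] := by
  ext i; fin_cases i <;> rfl

lemma update_vec_two_one {α : Type*} (a b x : α) : Function.update ![a, b] 1 x = ![a, x] := by
  ext i; fin_cases i <;> rfl

lemma update_fun_fin_one {α : Type*} (a x : α) :
    Function.update (fun _ : Fin 1 => a) 0 x = fun _ => x :=
  funext fun i => by rw [Subsingleton.elim i 0, Function.update_self]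

theorem dT_comp_theta : (dT k 2).comp (theta k) = (theta k).comp (dT k 1) := by
  refine Tot.hom_ext_one k fun x => ?_
  cases x <;> simp [dB, Fin.sum_univ_two, DB.deg, Finset.filter_eq', update_vec_two_zero,
    update_vec_two_one, update_fun_fin_one, add_comm]

theorem epsL_comp_theta : (epsL k).comp (theta k) = LinearMap.id := by
  refine Tot.hom_ext_one k fun x => ?_
  cases x <;> simp [epsL, epsB]

theorem epsR_comp_theta : (epsR k).comp (theta k) = LinearMap.id := by
  refine Tot.hom_ext_one k fun x => ?_
  cases x <;> simp [epsR, epsB]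

/-- The map `θ : D* → D* ⊗ D*` determined by `θ(1) = 1⊗1`,
`θ(Y_s) = Y_s ⊗ Y_s`, `θ(ω_s) = ω_s ⊗ Y_s + Y_s ⊗ ω_s` is a morphism of differential
graded `k`-algebras, and `(ε₋ ⊗ id) ∘ θ = id` and `(id ⊗ ε₋) ∘ θ = id`. -/
theorem statement16 (k : Type) [CommRing k] :
    -- determination of θ
    theta k (Finsupp.single (fun _ : Fin 1 => DB.one) (1 : k))
        = Finsupp.single ![DB.one, DB.one] 1 ∧
    (∀ s : ℤ, theta k (Finsupp.single (fun _ : Fin 1 => DB.Y s) (1 : k))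
        = Finsupp.single ![DB.Y s, DB.Y s] 1) ∧
    (∀ s : ℤ, theta k (Finsupp.single (fun _ : Fin 1 => DB.om s) (1 : k))
        = Finsupp.single ![DB.om s, DB.Y s] 1 + Finsupp.single ![DB.Y s, DB.om s] 1) ∧
    -- θ is multiplicative and unital
    (∀ x y : Tot k 1, theta k (mul1 k x y) = mul2 k (theta k x) (theta k y)) ∧
    -- θ is a chain map
    (dT k 2).comp (theta k) = (theta k).comp (dT k 1) ∧
    -- the two counit identities
    (epsL k).comp (theta k) = LinearMap.id ∧
    (epsR k).comp (theta k) = LinearMap.id :=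
  ⟨theta_one k, theta_Y k, theta_om k, theta_mul1 k, dT_comp_theta k, epsL_comp_theta k,
    epsR_comp_theta k⟩
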